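/- Let n > 0, x > 0, δ ∈ ℝ and y = x²/(n+x²). Then P_n(x;δ) = 1/2 − (e^{-δ²/2}/(2 B(1/2, n/2))) ∫₀^{1-y} t^{n/2-1} (1-t)^{-1/2} ₁F₁((n+1)/2; 1/2; δ²(1-t)/2) dt. -/

import Mathlib

open Real MeasureTheory

/-- Complementary error function. -/
noncomputable def erfc (z : ℝ) : ℝ := (2 / Real.sqrt π) * ∫ t in Set.Ioi z, Real.exp (-t^2)

/-- Error function. -/
noncomputable def erf (z : ℝ) : ℝ := 1 - erfc z

/-- Beta function B(a,b) = Γ(a)Γ(b)/Γ(a+b). -/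
noncomputable def betaFn (a b : ℝ) : ℝ := Real.Gamma a * Real.Gamma b / Real.Gamma (a + b)

/-- Regularized incomplete beta function I_y(a,b). -/
noncomputable def regIncBeta (y a b : ℝ) : ℝ :=
  (1 / betaFn a b) * ∫ t in (0:ℝ)..y, t ^ (a - 1) * (1 - t) ^ (b - 1)

/-- The function P_n(x;δ). -/
noncomputable def Pnt (n x δ : ℝ) : ℝ :=
  (1/2) * Real.exp (-δ^2/2) *
    ∑' j : ℕ, ((δ^2/2)^j / (Nat.factorial j : ℝ)) *
      regIncBeta (x^2/(n + x^2)) ((j : ℝ) + 1/2) (n/2)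

/-- The function Q_n(x;δ). -/
noncomputable def Qnt (n x δ : ℝ) : ℝ :=
  (1/2) * Real.exp (-δ^2/2) *
    ∑' j : ℕ, (δ / Real.sqrt 2) * ((δ^2/2)^j / Real.Gamma ((j : ℝ) + 3/2)) *
      regIncBeta (x^2/(n + x^2)) ((j : ℝ) + 1) (n/2)

/-- The noncentral t cumulative distribution function F_n(x;δ). -/
noncomputable def Fnt (n x δ : ℝ) : ℝ :=
  (1/2) * erfc (δ / Real.sqrt 2) + Pnt n x δ + Qnt n x δ

/-- The function R_n(x;δ) = erfc(δ/√2)/2 + Q_n(x;δ) − P_n(x;δ). -/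
noncomputable def Rnt (n x δ : ℝ) : ℝ :=
  (1/2) * erfc (δ / Real.sqrt 2) + Qnt n x δ - Pnt n x δ

/-- Kummer's confluent hypergeometric function ₁F₁(a;b;z). -/
noncomputable def kummerM (a b z : ℝ) : ℝ :=
  ∑' k : ℕ, (Real.Gamma (a + k) / Real.Gamma a) / (Real.Gamma (b + k) / Real.Gamma b) *
    z^k / (Nat.factorial k : ℝ)


/-! Reflection of the incomplete beta function, `I_y(j+1/2, n/2) = 1 - I_{1-y}(n/2, j+1/2)`,
together with `∑ c^j/j! = e^c` for `c = δ²/2`, gives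
`P_n = 1/2 - (e^{-c}/2) ∑_j c^j/j! I_{1-y}(n/2, j+1/2)`. Each `I_{1-y}` is an integral over
`(0, 1-y)`; the series of their absolute values is dominated by the exponential series, so sum and
integral may be exchanged, and the integrand then sums to a Kummer series because
`1/B(n/2, j+1/2) = ((n+1)/2)_j / ((1/2)_j B(1/2, n/2))`. -/

open scoped Nat

lemma ofReal_betaIntegrand {a b t : ℝ} (ht : t ∈ Set.Icc (0:ℝ) 1) :
    ((t ^ (a - 1) * (1 - t) ^ (b - 1) : ℝ) : ℂ)
      = (t : ℂ) ^ ((a : ℂ) - 1) * (1 - (t : ℂ)) ^ ((b : ℂ) - 1) := by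
  rw [Complex.ofReal_mul, Complex.ofReal_cpow ht.1, Complex.ofReal_cpow (sub_nonneg.2 ht.2)]
  push_cast
  rfl

lemma ofReal_integral_betaIntegrand (a b : ℝ) :
    ((∫ t in (0:ℝ)..1, t ^ (a - 1) * (1 - t) ^ (b - 1) : ℝ) : ℂ)
      = Complex.betaIntegral a b := by
  rw [Complex.betaIntegral, ← intervalIntegral.integral_ofReal]
  refine intervalIntegral.integral_congr fun t ht => ?_
  exact ofReal_betaIntegrand (by rwa [Set.uIcc_of_le zero_le_one] at ht)

lemma intervalIntegrable_betaIntegrand {a b u v : ℝ} (ha : 0 < a) (hb : 0 < b)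
    (hu : u ∈ Set.Icc (0:ℝ) 1) (hv : v ∈ Set.Icc (0:ℝ) 1) :
    IntervalIntegrable (fun t : ℝ => t ^ (a - 1) * (1 - t) ^ (b - 1)) volume u v := by
  have hC : IntervalIntegrable (fun t : ℝ => ((t ^ (a - 1) * (1 - t) ^ (b - 1) : ℝ) : ℂ))
      volume 0 1 :=
    (Complex.betaIntegral_convergent (by simpa) (by simpa)).congr fun t ht =>
      (ofReal_betaIntegrand (by simpa using Set.Ioc_subset_Icc_self ht)).symm
  have hR : IntervalIntegrable (fun t : ℝ => t ^ (a - 1) * (1 - t) ^ (b - 1)) volume 0 1 := by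
    rw [intervalIntegrable_iff] at hC ⊢
    simpa [IntegrableOn] using hC.re
  rw [← Set.uIcc_of_le zero_le_one] at hu hv
  exact hR.mono_set (Set.uIcc_subset_uIcc hu hv)

lemma betaIntegrand_nonneg {a b t : ℝ} (ht : t ∈ Set.Icc (0:ℝ) 1) :
    0 ≤ t ^ (a - 1) * (1 - t) ^ (b - 1) :=
  mul_nonneg (Real.rpow_nonneg ht.1 _) (Real.rpow_nonneg (sub_nonneg.2 ht.2) _)

lemma betaFn_pos {a b : ℝ} (ha : 0 < a) (hb : 0 < b) : 0 < betaFn a b :=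
  ProbabilityTheory.beta_pos ha hb

lemma betaFn_comm (a b : ℝ) : betaFn a b = betaFn b a := by
  rw [betaFn, betaFn, mul_comm, add_comm]

lemma integral_betaIntegrand {a b : ℝ} (ha : 0 < a) (hb : 0 < b) :
    ∫ t in (0:ℝ)..1, t ^ (a - 1) * (1 - t) ^ (b - 1) = betaFn a b := by
  rw [betaFn, ← ProbabilityTheory.beta, ProbabilityTheory.beta_eq_betaIntegralReal a b ha hb,
    ← ofReal_integral_betaIntegrand, Complex.ofReal_re]

lemma regIncBeta_add_regIncBeta_one_sub {z a b : ℝ} (hz : z ∈ Set.Icc (0:ℝ) 1)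
    (ha : 0 < a) (hb : 0 < b) :
    regIncBeta z a b + regIncBeta (1 - z) b a = 1 := by
  have h01 : (0:ℝ) ∈ Set.Icc (0:ℝ) 1 := Set.left_mem_Icc.2 zero_le_one
  have h11 : (1:ℝ) ∈ Set.Icc (0:ℝ) 1 := Set.right_mem_Icc.2 zero_le_one
  have hreflect : ∫ t in (0:ℝ)..(1 - z), t ^ (b - 1) * (1 - t) ^ (a - 1)
      = ∫ t in z..1, t ^ (a - 1) * (1 - t) ^ (b - 1) := by
    simpa [mul_comm] using intervalIntegral.integral_comp_sub_left
      (fun t : ℝ => t ^ (a - 1) * (1 - t) ^ (b - 1)) (a := 0) (b := 1 - z) 1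
  have hsplit := intervalIntegral.integral_add_adjacent_intervals
    (intervalIntegrable_betaIntegrand ha hb h01 hz) (intervalIntegrable_betaIntegrand ha hb hz h11)
  rw [integral_betaIntegrand ha hb] at hsplit
  rw [regIncBeta, regIncBeta, hreflect, betaFn_comm b a, ← mul_add, hsplit,
    one_div_mul_cancel (betaFn_pos ha hb).ne']

lemma regIncBeta_nonneg {z a b : ℝ} (hz : z ∈ Set.Icc (0:ℝ) 1) (ha : 0 < a) (hb : 0 < b) :
    0 ≤ regIncBeta z a b :=
  mul_nonneg (one_div_nonneg.2 (betaFn_pos ha hb).le) <|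
    intervalIntegral.integral_nonneg hz.1 fun _ ht =>
      betaIntegrand_nonneg ⟨ht.1, ht.2.trans hz.2⟩

lemma regIncBeta_le_one {z a b : ℝ} (hz : z ∈ Set.Icc (0:ℝ) 1) (ha : 0 < a) (hb : 0 < b) :
    regIncBeta z a b ≤ 1 := by
  have hrest := regIncBeta_nonneg (z := 1 - z) ⟨sub_nonneg.2 hz.2, by linarith [hz.1]⟩ hb ha
  linarith [regIncBeta_add_regIncBeta_one_sub hz ha hb]

lemma pow_div_factorial_div_betaFn_mul_rpow {a b c u : ℝ} (ha : 0 < a) (hb : 0 < b)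
    (hu : 0 < u) (j : ℕ) :
    c ^ j / j ! * (1 / betaFn a (j + b) * u ^ ((j : ℝ) + b - 1))
      = 1 / betaFn b a * (u ^ (b - 1) *
        (Real.Gamma (a + b + j) / Real.Gamma (a + b) / (Real.Gamma (b + j) / Real.Gamma b) *
          (c * u) ^ j / j !)) := by
  have := Real.Gamma_pos_of_pos ha
  have := Real.Gamma_pos_of_pos hb
  have := Real.Gamma_pos_of_pos (add_pos ha hb)
  have := Real.Gamma_pos_of_pos (by positivity : 0 < b + j)
  have := Real.Gamma_pos_of_pos (by positivity : 0 < a + b + j)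
  have hpow : u ^ ((j : ℝ) + b - 1) = u ^ j * u ^ (b - 1) := by
    rw [add_sub_assoc, Real.rpow_add hu, Real.rpow_natCast]
  rw [hpow, betaFn, betaFn, show a + (j + b) = a + b + j by ring, add_comm (j : ℝ) b,
    add_comm b a, mul_pow]
  field_simp

lemma tsum_pow_div_factorial_mul_betaDensity {a b c t : ℝ} (ha : 0 < a) (hb : 0 < b)
    (ht : t < 1) :
    ∑' j : ℕ,
        c ^ j / j ! * (1 / betaFn a (j + b) * (t ^ (a - 1) * (1 - t) ^ ((j : ℝ) + b - 1)))
      = 1 / betaFn b a * (t ^ (a - 1) * (1 - t) ^ (b - 1) * kummerM (a + b) b (c * (1 - t))) := by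
  rw [kummerM, ← tsum_mul_left, ← tsum_mul_left]
  refine tsum_congr fun j => ?_
  have := pow_div_factorial_div_betaFn_mul_rpow (c := c) ha hb (sub_pos.2 ht) j
  linear_combination (t ^ (a - 1)) * this

lemma integral_pow_div_factorial_mul_betaDensity {a b c z : ℝ} (hz : 0 ≤ z) (j : ℕ) :
    ∫ t in Set.Ioo (0:ℝ) z,
        c ^ j / j ! * (1 / betaFn a (j + b) * (t ^ (a - 1) * (1 - t) ^ ((j : ℝ) + b - 1)))
      = c ^ j / j ! * regIncBeta z a (j + b) := by
  rw [integral_const_mul, integral_const_mul, regIncBeta, intervalIntegral.integral_of_le hz,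
    integral_Ioc_eq_integral_Ioo]

theorem hasSum_pow_div_factorial_mul_regIncBeta {a b c z : ℝ} (ha : 0 < a) (hb : 0 < b)
    (hz : z ∈ Set.Icc (0:ℝ) 1) :
    HasSum (fun j : ℕ => c ^ j / j ! * regIncBeta z a (j + b))
      (1 / betaFn b a * ∫ t in (0:ℝ)..z,
        t ^ (a - 1) * (1 - t) ^ (b - 1) * kummerM (a + b) b (c * (1 - t))) := by
  set F : ℝ → ℕ → ℝ → ℝ := fun c j t =>
    c ^ j / j ! * (1 / betaFn a (j + b) * (t ^ (a - 1) * (1 - t) ^ ((j : ℝ) + b - 1))) with hF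
  have hb' (j : ℕ) : 0 < (j : ℝ) + b := by positivity
  have hF_int (j : ℕ) : IntegrableOn (F c j) (Set.Ioo 0 z) := by
    have h := intervalIntegrable_betaIntegrand ha (hb' j) (Set.left_mem_Icc.2 zero_le_one) hz
    rw [intervalIntegrable_iff_integrableOn_Ioc_of_le hz.1] at h
    exact ((h.mono_set Set.Ioo_subset_Ioc_self).const_mul _).const_mul _
  have hF_norm (j : ℕ) :
      ∫ t in Set.Ioo 0 z, ‖F c j t‖ = |c| ^ j / j ! * regIncBeta z a (j + b) := by
    rw [← integral_pow_div_factorial_mul_betaDensity hz.1]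
    refine setIntegral_congr_fun measurableSet_Ioo fun t ht => ?_
    have hdensity := betaIntegrand_nonneg (a := a) (b := j + b) ⟨ht.1.le, ht.2.le.trans hz.2⟩
    have hB := one_div_pos.2 (betaFn_pos ha (hb' j))
    simp only [hF, Real.norm_eq_abs, abs_mul (c ^ j / j !), abs_div, abs_pow, Nat.abs_cast,
      abs_of_nonneg (mul_nonneg hB.le hdensity)]
  have hsum : Summable fun j : ℕ => |c| ^ j / j ! * regIncBeta z a (j + b) :=
    (Real.summable_pow_div_factorial |c|).of_nonneg_of_le
      (fun j => mul_nonneg (by positivity) (regIncBeta_nonneg hz ha (hb' j)))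
      (fun j => mul_le_of_le_one_right (by positivity) (regIncBeta_le_one hz ha (hb' j)))
  have h := hasSum_integral_of_summable_integral_norm hF_int (by simpa only [hF_norm] using hsum)
  simp only [hF, integral_pow_div_factorial_mul_betaDensity hz.1] at h
  rwa [setIntegral_congr_fun measurableSet_Ioo
      fun t ht => tsum_pow_div_factorial_mul_betaDensity ha hb (ht.2.trans_le hz.2),
    integral_const_mul, ← integral_Ioc_eq_integral_Ioo,
    ← intervalIntegral.integral_of_le hz.1] at h

theorem Pnt_integral_rep_complementary_general (n x δ : ℝ) (hn : 0 < n)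
    (y : ℝ) (hy : y = x^2 / (n + x^2)) :
    Pnt n x δ =
      1/2 - (Real.exp (-δ^2/2) / (2 * betaFn (1/2) (n/2))) *
        ∫ t in (0:ℝ)..(1 - y),
          t ^ (n/2 - 1) * (1 - t) ^ (-(1:ℝ)/2) * kummerM ((n+1)/2) (1/2) (δ^2 * (1 - t) / 2) := by
  have hy_mem : y ∈ Set.Icc (0:ℝ) 1 :=
    ⟨hy ▸ by positivity, hy ▸ (div_le_one (by positivity)).2 (by linarith)⟩
  have hn2 : 0 < n / 2 := by positivity
  have hexp := NormedSpace.expSeries_div_hasSum_exp (δ ^ 2 / 2)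
  rw [← Real.exp_eq_exp_ℝ] at hexp
  have hseries := hasSum_pow_div_factorial_mul_regIncBeta (c := δ ^ 2 / 2) hn2 one_half_pos
    ⟨sub_nonneg.2 hy_mem.2, by linarith [hy_mem.1]⟩
  simp only [show (1/2 : ℝ) - 1 = -1/2 by norm_num, show n/2 + 1/2 = (n+1)/2 by ring,
    show ∀ t : ℝ, δ^2/2 * (1 - t) = δ^2 * (1 - t) / 2 from fun t => by ring] at hseries
  have hterms : (fun j : ℕ => (δ^2/2) ^ j / (j ! : ℝ) * regIncBeta y (j + 1/2) (n/2))
      = fun j => (δ^2/2) ^ j / (j ! : ℝ)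
          - (δ^2/2) ^ j / j ! * regIncBeta (1 - y) (n/2) (j + 1/2) := by
    funext j
    rw [eq_sub_of_add_eq (regIncBeta_add_regIncBeta_one_sub hy_mem (by positivity) hn2)]
    ring
  have hexp_neg : Real.exp (-δ^2/2) * Real.exp (δ^2/2) = 1 := by
    rw [← Real.exp_add, neg_div, neg_add_cancel, Real.exp_zero]
  rw [Pnt, ← hy, hterms, (hexp.sub hseries).tsum_eq, mul_sub, mul_assoc (1/2 : ℝ), hexp_neg]
  ring

theorem Pnt_integral_rep_complementary (n x δ : ℝ) (hn : 0 < n) (hx : 0 < x)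
    (y : ℝ) (hy : y = x^2 / (n + x^2)) :
    Pnt n x δ =
      1/2 - (Real.exp (-δ^2/2) / (2 * betaFn (1/2) (n/2))) *
        ∫ t in (0:ℝ)..(1 - y),
          t ^ (n/2 - 1) * (1 - t) ^ (-(1:ℝ)/2) * kummerM ((n+1)/2) (1/2) (δ^2 * (1 - t) / 2) :=
  Pnt_integral_rep_complementary_general n x δ hn y hy
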